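/- Let 𝔽 be a field and f : V_1×⋯×V_k → 𝔽 a multilinear map between finite-dimensional 𝔽-vector spaces with dim V_i = n_i. Let F and G be two k-tuples of complete flags of V_1,…,V_k. Then there exist permutations φ_i : [n_i] → [n_i] (i ∈ [k]) such that (φ_1×⋯×φ_k)(M_G f) ⊆ supp_F f, where M_G f is the set of maximal points of supp_G f in the product order. -/

import Mathlib

open scoped BigOperators
open scoped Classical
open scoped ComplexOrder

noncomputable section

namespace CVZ

variable {k : ℕ}

/-- A concrete `k`-tensor over `F` with index types `I i`: the coefficient array
(in the standard bases) of a multilinear map `V₁ × ⋯ × V_k → F` with `dim V_i = |I i|`. -/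
abbrev Tensor (F : Type*) (I : Fin k → Type*) : Type _ := (∀ i, I i) → F

section Basic

variable {F : Type*} [Field F] {I J : Fin k → Type*}
  [∀ i, Fintype (I i)] [∀ i, DecidableEq (I i)]
  [∀ i, Fintype (J i)] [∀ i, DecidableEq (J i)]

/-- Coefficient array of the restriction `f ∘ (A₁, …, A_k)`, where `A_i : W_i → V_i`
is given by the matrix `A i`. -/
def restrictBy (A : ∀ i, Matrix (I i) (J i) F) (t : Tensor F I) : Tensor F J :=
  fun β => ∑ α : ∀ i, I i, (∏ i, A i (α i) (β i)) * t α

/-- `t` restricts to `s`. -/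
def Restricts (t : Tensor F I) (s : Tensor F J) : Prop :=
  ∃ A : ∀ i, Matrix (I i) (J i) F, restrictBy A t = s

/-- A choice of bases of the spaces `V_i`, encoded as a tuple of invertible matrices. -/
def IsBasisTuple (B : ∀ i, Matrix (I i) (I i) F) : Prop := ∀ i, IsUnit (B i)

/-- Support of a tensor (with respect to the standard bases). -/
def supp (t : Tensor F I) : Set (∀ i, I i) := {α | t α ≠ 0}

end Basic

section Entropy

/-- A probability distribution on the finite set `X`. -/
def IsProbDist {X : Type*} [Fintype X] (P : X → ℝ) : Prop :=
  (∀ x, 0 ≤ P x) ∧ ∑ x, P x = 1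

/-- Base-2 Shannon entropy. -/
def H2 {X : Type*} [Fintype X] (P : X → ℝ) : ℝ :=
  ∑ x, -(P x * Real.logb 2 (P x))

variable {I : Fin k → Type*} [∀ i, Fintype (I i)] [∀ i, DecidableEq (I i)]

/-- The `i`-th marginal of a distribution on a product set. -/
def marg (P : (∀ i, I i) → ℝ) (i : Fin k) : I i → ℝ :=
  fun a => ∑ α : ∀ i, I i, if α i = a then P α else 0

/-- `H_θ(P)`, the `θ`-weighted average of the marginal entropies. -/
def Hw (θ : Fin k → ℝ) (P : (∀ i, I i) → ℝ) : ℝ :=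
  ∑ i, θ i * H2 (marg P i)

/-- `H_θ(Φ)`, the supremum of `H_θ(P)` over distributions `P` supported on `Φ`. -/
def HwSet (θ : Fin k → ℝ) (Φ : Set (∀ i, I i)) : ℝ :=
  sSup {h | ∃ P : (∀ i, I i) → ℝ, IsProbDist P ∧ (∀ α, P α ≠ 0 → α ∈ Φ) ∧ h = Hw θ P}

/-- Maximal points of a subset of the product order. -/
def maxPoints [∀ i, LinearOrder (I i)] (Φ : Set (∀ i, I i)) : Set (∀ i, I i) :=
  {α | α ∈ Φ ∧ ∀ β ∈ Φ, ¬ α < β}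

end Entropy

section SuppFunc

variable {F : Type*} [Field F] {I : Fin k → Type*} [∀ i, Fintype (I i)] [∀ i, DecidableEq (I i)]

/-- The logarithmic Strassen upper support functional `ρ^θ`. -/
def rhoUpper (θ : Fin k → ℝ) (t : Tensor F I) : ℝ :=
  sInf {h | ∃ B : ∀ i, Matrix (I i) (I i) F, IsBasisTuple B ∧
    h = HwSet θ (supp (restrictBy B t))}

/-- The Strassen upper support functional `ζ^θ`. -/
def zetaUpper (θ : Fin k → ℝ) (t : Tensor F I) : ℝ :=
  if t = 0 then 0 else (2 : ℝ) ^ rhoUpper θ t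

/-- The logarithmic Strassen lower support functional `ρ_θ`. -/
def rhoLower [∀ i, LinearOrder (I i)] (θ : Fin k → ℝ) (t : Tensor F I) : ℝ :=
  sSup {h | ∃ B : ∀ i, Matrix (I i) (I i) F, IsBasisTuple B ∧
    h = HwSet θ (maxPoints (supp (restrictBy B t)))}

/-- The Strassen lower support functional `ζ_θ`. -/
def zetaLower [∀ i, LinearOrder (I i)] (θ : Fin k → ℝ) (t : Tensor F I) : ℝ :=
  if t = 0 then 0 else (2 : ℝ) ^ rhoLower θ t

/-- The instability of a tensor. -/
def instab (t : Tensor F I) : ℝ :=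
  sSup {ε : ℝ | 0 ≤ ε ∧ ∃ B : ∀ i, Matrix (I i) (I i) F, IsBasisTuple B ∧
    ∃ w : ∀ i, I i → ℝ, (∀ i x, 0 ≤ w i x) ∧ (∀ i, ∃ x, w i x ≠ 0) ∧
      ∀ a ∈ supp (restrictBy B t), ∑ i, w i (a i) ≤
        ∑ i, ((∑ x : I i, w i x) / (Fintype.card (I i) : ℝ) - ε * ⨆ x : I i, w i x)}

end SuppFunc

section Ops

variable {F : Type*} [Field F]

/-- The unit tensor `⟨r⟩`. -/
def unitTensor (F : Type*) [Field F] (k r : ℕ) : Tensor F (fun _ : Fin k => Fin r) :=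
  fun α => if ∀ i j : Fin k, α i = α j then 1 else 0

variable {n m : Fin k → ℕ}

/-- Direct sum of two tensors, with the concatenated (naturally ordered) bases. -/
def dirSumFin (s : Tensor F fun i => Fin (n i)) (t : Tensor F fun i => Fin (m i)) :
    Tensor F fun i => Fin (n i + m i) :=
  fun α =>
    (if h : ∀ i, (α i : ℕ) < n i then s (fun i => ⟨(α i : ℕ), h i⟩) else 0) +
    (if h : ∀ i, n i ≤ (α i : ℕ) then
      t (fun i => ⟨(α i : ℕ) - n i, by have h1 := (α i).isLt; have h2 := h i; omega⟩) else 0)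

/-- Tensor (Kronecker) product of two tensors, with the product bases ordered naturally. -/
def tensMulFin (s : Tensor F fun i => Fin (n i)) (t : Tensor F fun i => Fin (m i)) :
    Tensor F fun i => Fin (n i * m i) :=
  fun α =>
    s (fun i => ⟨(α i : ℕ) / m i, by
      have h := (α i).isLt
      exact Nat.div_lt_of_lt_mul (lt_of_lt_of_le h (Nat.mul_comm (n i) (m i)).le)⟩) *
    t (fun i => ⟨(α i : ℕ) % m i, by
      have h := (α i).isLt
      have hpos : 0 < n i * m i := Nat.lt_of_le_of_lt (Nat.zero_le _) h
      have hm : 0 < m i := by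
        rcases Nat.eq_zero_or_pos (m i) with h0 | h0
        · simp [h0] at hpos
        · exact h0
      exact Nat.mod_lt _ hm⟩)

/-- The `N`-th tensor power of a tensor (grouping the legs into `k` groups). -/
def tpow {I : Fin k → Type*} (t : Tensor F I) (N : ℕ) : Tensor F fun i => Fin N → I i :=
  fun α => ∏ j : Fin N, t fun i => α i j

end Ops

section Subrank

variable {F : Type*} [Field F] {I : Fin k → Type*} [∀ i, Fintype (I i)] [∀ i, DecidableEq (I i)]

/-- The subrank `Q(t)` of a tensor: the largest `r` with `⟨r⟩ ≤ t`. -/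
def Qtensor (t : Tensor F I) : ℕ :=
  sSup {r : ℕ | Restricts t (unitTensor F k r)}

/-- A slice: a tensor of the form `v ⊗ w` with `v` in the `j`-th leg. -/
def IsSlice (s : Tensor F I) : Prop :=
  ∃ (j : Fin k) (v : I j → F) (w : (∀ i : {i : Fin k // i ≠ j}, I i.1) → F),
    ∀ α, s α = v (α j) * w (fun i => α i.1)

/-- The slice rank of a tensor. -/
def sliceRank (t : Tensor F I) : ℕ :=
  sInf {r : ℕ | ∃ c : Fin r → Tensor F I, (∀ a, IsSlice (c a)) ∧ t = ∑ a, c a}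

end Subrank

section Combinatorial

variable {I : Fin k → Type*}

/-- A diagonal: any two distinct elements differ in all coordinates. -/
def IsDiagonal (D : Set (∀ i, I i)) : Prop :=
  ∀ a ∈ D, ∀ b ∈ D, a ≠ b → ∀ i, a i ≠ b i

/-- The `i`-th projection of a set of tuples. -/
def projSet (D : Set (∀ i, I i)) (i : Fin k) : Set (I i) := {x | ∃ a ∈ D, a i = x}

/-- A free diagonal in `Φ`: a diagonal `D` with `D = Φ ∩ (D₁ × ⋯ × D_k)`. -/
def IsFreeDiagonal (D Φ : Set (∀ i, I i)) : Prop :=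
  IsDiagonal D ∧ D = Φ ∩ {a | ∀ i, a i ∈ projSet D i}

/-- The (combinatorial) subrank of a set: the maximal size of a free diagonal. -/
def Qset (Φ : Set (∀ i, I i)) : ℕ :=
  sSup {r : ℕ | ∃ D : Set (∀ i, I i), IsFreeDiagonal D Φ ∧ D.ncard = r}

/-- The `N`-fold coordinatewise power of a set of tuples. -/
def setPow (Φ : Set (∀ i, I i)) (N : ℕ) : Set (∀ i, Fin N → I i) :=
  {α | ∀ j : Fin N, (fun i => α i j) ∈ Φ}

/-- A tight set. -/
def TightSet (Φ : Set (∀ i, I i)) : Prop :=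
  ∃ u : ∀ i, I i → ℤ, (∀ i, Function.Injective (u i)) ∧ ∀ α ∈ Φ, ∑ i, u i (α i) = 0

/-- `Φ` is a combinatorial degeneration of `Ψ` (written `Ψ ⊵ Φ`). -/
def CombDegen (Ψ Φ : Set (∀ i, I i)) : Prop :=
  Φ ⊆ Ψ ∧ ∃ u : ∀ i, I i → ℤ,
    (∀ α ∈ Φ, ∑ i, u i (α i) = 0) ∧ ∀ α ∈ Ψ, α ∉ Φ → 0 < ∑ i, u i (α i)

end Combinatorial

/-- A tight tensor: some basis tuple gives a tight support. -/
def TightTensor {F : Type*} [Field F] {I : Fin k → Type*} [∀ i, Fintype (I i)]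
    [∀ i, DecidableEq (I i)] (t : Tensor F I) : Prop :=
  ∃ B : ∀ i, Matrix (I i) (I i) F, IsBasisTuple B ∧ TightSet (supp (restrictBy B t))

/-- A complete (decreasing) flag of subspaces, `W 0 = ⊤` and `dim (W j) = dim V − j`. -/
def IsCompleteFlag (F : Type*) [Field F] {V : Type*} [AddCommGroup V] [Module F V]
    (W : ℕ → Submodule F V) : Prop :=
  Antitone W ∧ W 0 = ⊤ ∧ ∀ j : ℕ, Module.finrank F (W j) = Module.finrank F V - j

/-- Evaluation of (the multilinear map associated with) `t` at a tuple of vectors. -/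
def eval {F : Type*} [Field F] {I : Fin k → Type*} [∀ i, Fintype (I i)] [∀ i, DecidableEq (I i)]
    (t : Tensor F I) (v : ∀ i, I i → F) : F :=
  ∑ α : ∀ i, I i, (∏ i, v i (α i)) * t α

/-- The support of `t` with respect to a tuple of complete flags. -/
def suppFlag {F : Type*} [Field F] {n : Fin k → ℕ} (t : Tensor F fun i => Fin (n i))
    (W : ∀ i, ℕ → Submodule F (Fin (n i) → F)) : Set (∀ i, Fin (n i)) :=
  {α | ∃ v : ∀ i, Fin (n i) → F, (∀ i, v i ∈ W i (α i : ℕ)) ∧ eval t v ≠ 0}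

section Quantum

variable {I : Fin k → Type*} [∀ i, Fintype (I i)] [∀ i, DecidableEq (I i)]

/-- Von Neumann entropy (base 2) of a Hermitian matrix. -/
def vnEntropy {d : Type*} [Fintype d] [DecidableEq d] (ρ : Matrix d d ℂ) : ℝ :=
  if h : ρ.IsHermitian then ∑ x, -(h.eigenvalues x * Real.logb 2 (h.eigenvalues x)) else 0

/-- The `j`-th marginal (reduced density matrix) of the pure state `|t⟩⟨t| / ⟨t|t⟩`. -/
def margMat (t : Tensor ℂ I) (j : Fin k) : Matrix (I j) (I j) ℂ :=
  fun a b =>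
    (∑ α : ∀ i, I i, ∑ β : ∀ i, I i,
      if α j = a ∧ β j = b ∧ (∀ i, i ≠ j → α i = β i) then t α * star (t β) else 0) /
    ∑ α : ∀ i, I i, t α * star (t α)

/-- The logarithmic lower quantum functional `E_θ` for `θ` a distribution on `[k]`. -/
def Ewq (θ : Fin k → ℝ) (t : Tensor ℂ I) : ℝ :=
  sSup {h | ∃ A : ∀ i, Matrix (I i) (I i) ℂ, IsBasisTuple A ∧
    h = ∑ j, θ j * vnEntropy (margMat (restrictBy A t) j)}

/-- The marginal (reduced density matrix) on the legs in `S` of the pure state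
`|t⟩⟨t| / ⟨t|t⟩`. -/
def margMatSet (t : Tensor ℂ I) (S : Finset (Fin k)) :
    Matrix (∀ i : {x : Fin k // x ∈ S}, I i.1) (∀ i : {x : Fin k // x ∈ S}, I i.1) ℂ :=
  fun a b =>
    (∑ α : ∀ i, I i, ∑ β : ∀ i, I i,
      if (∀ (i : Fin k) (hi : i ∈ S), α i = a ⟨i, hi⟩ ∧ β i = b ⟨i, hi⟩) ∧
         (∀ i, i ∉ S → α i = β i)
      then t α * star (t β) else 0) /
    ∑ α : ∀ i, I i, t α * star (t α)

/-- A probability distribution on the bipartitions `{S, S̄}` of `[k]` (encoded by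
choosing a representative `S` for each bipartition occurring in the support). -/
def IsBipDist (θ : Finset (Fin k) → ℝ) : Prop :=
  (∀ S, 0 ≤ θ S) ∧ (∀ S, θ S ≠ 0 → S.Nonempty ∧ Sᶜ.Nonempty) ∧
    ∑ S : Finset (Fin k), θ S = 1

/-- The logarithmic lower quantum functional `E_θ` for `θ` a distribution on bipartitions. -/
def EwqBip (θ : Finset (Fin k) → ℝ) (t : Tensor ℂ I) : ℝ :=
  sSup {h | ∃ A : ∀ i, Matrix (I i) (I i) ℂ, IsBasisTuple A ∧
    h = ∑ S : Finset (Fin k), θ S * vnEntropy (margMatSet (restrictBy A t) S)}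

/-- The lower quantum functional `F_θ`. -/
def FwqBip (θ : Finset (Fin k) → ℝ) (t : Tensor ℂ I) : ℝ :=
  if t = 0 then 0 else (2 : ℝ) ^ EwqBip θ t

/-- Degeneration: `t` lies in the closure of the `GL × ⋯ × GL`-orbit of `s`. -/
def Degen (s t : Tensor ℂ I) : Prop :=
  t ∈ closure {u : Tensor ℂ I | ∃ A : ∀ i, Matrix (I i) (I i) ℂ,
    IsBasisTuple A ∧ restrictBy A s = u}

end Quantum

/-- Trace norm of a complex matrix: `Tr √(AᴴA)`. -/
def traceNorm {d : Type*} [Fintype d] [DecidableEq d] (A : Matrix d d ℂ) : ℝ :=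
  ((let hA := (Matrix.posSemidef_conjTranspose_mul_self A).1
    (hA.eigenvectorUnitary : Matrix d d ℂ) *
      Matrix.diagonal (fun i => ((Real.sqrt (hA.eigenvalues i) : ℝ) : ℂ)) *
      (star hA.eigenvectorUnitary : Matrix d d ℂ)).trace).re

/-- `conjIter ρ X j = X_j ⋯ X_2 X_1 ρ X_1 X_2 ⋯ X_j`. -/
def conjIter {d : Type*} [Fintype d] (ρ : Matrix d d ℂ) {n : ℕ}
    (X : Fin n → Matrix d d ℂ) : ℕ → Matrix d d ℂ
  | 0 => ρ
  | (j + 1) => if h : j < n then X ⟨j, h⟩ * conjIter ρ X j * X ⟨j, h⟩ else conjIter ρ X j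

/-- A tricolored sum-free set in `G × G × G`. -/
def IsTriColoredSumFree {G : Type*} [AddCommGroup G] (Γ : Set (G × G × G)) : Prop :=
  (∀ a ∈ Γ, ∀ b ∈ Γ, a ≠ b → a.1 ≠ b.1 ∧ a.2.1 ≠ b.2.1 ∧ a.2.2 ≠ b.2.2) ∧
  ∀ x y z : G, (∃ a ∈ Γ, a.1 = x) → (∃ a ∈ Γ, a.2.1 = y) → (∃ a ∈ Γ, a.2.2 = z) →
    (x + y + z = 0 ↔ (x, y, z) ∈ Γ)

/-- The maximal size `s₃(G)` of a tricolored sum-free set in `G × G × G`. -/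
def s3 (G : Type*) [AddCommGroup G] : ℕ :=
  sSup {r : ℕ | ∃ Γ : Set (G × G × G), IsTriColoredSumFree Γ ∧ Γ.ncard = r}

/-- Binary entropy function (base 2), with the convention `0 · log 0 = 0`. -/
def binH (p : ℝ) : ℝ := -(p * Real.logb 2 p) - (1 - p) * Real.logb 2 (1 - p)

open Filter Topology

open Module Submodule

/-! For each `i`, the flags `G i` and `Fl i` have a common adapted basis up to a permutation
(Bruhat decomposition): vectors `b α ∈ G α \ G (α + 1)` with `b α ∈ Fl (w α)` for a permutation
`w`. The `b γ` with `γ ≥ α` span `G α`, so by multilinearity every point of `supp_G f` lies below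
some `β` with `f (b β) ≠ 0`. At a maximal point `α` this forces `f (b α) ≠ 0`, and then `b α`
witnesses `w α ∈ supp_F f`. -/

lemma _root_.MultilinearMap.exists_apply_ne_zero_of_mem_span {R ι N : Type*} [CommSemiring R]
    [Fintype ι] {M : ι → Type*} [∀ i, AddCommMonoid (M i)]
    [∀ i, Module R (M i)] [AddCommMonoid N] [Module R N] (g : MultilinearMap R M N)
    {s : ∀ i, Set (M i)} {v : ∀ i, M i} (hv : ∀ i, v i ∈ span R (s i))
    (hg : g v ≠ 0) : ∃ x ∈ Set.univ.pi s, g x ≠ 0 := by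
  choose m c u hu using fun i => mem_span_set'.mp (hv i)
  have hsum : g v = ∑ r : ∀ i, Fin (m i), (∏ i, c i (r i)) • g fun i => u i (r i) := by
    rw [show v = fun i => ∑ j, c i j • (u i j : M i) from funext fun i => (hu i).symm, g.map_sum]
    simp only [g.map_smul_univ]
  obtain ⟨r, -, hr⟩ := Finset.exists_ne_zero_of_sum_ne_zero (hsum ▸ hg)
  exact ⟨fun i => u i (r i), fun i _ => (u i (r i)).2, right_ne_zero_of_smul hr⟩

section Eval

variable {F : Type*} [Field F] {I : Fin k → Type*} [∀ i, Fintype (I i)] [∀ i, DecidableEq (I i)]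

def toMultilinearMap (t : Tensor F I) : MultilinearMap F (fun i => I i → F) F :=
  ∑ α, t α • (MultilinearMap.mkPiAlgebra F (Fin k) F).compLinearMap fun i => LinearMap.proj (α i)

@[simp]
lemma toMultilinearMap_apply (t : Tensor F I) (v : ∀ i, I i → F) :
    toMultilinearMap t v = eval t v := by
  simp [toMultilinearMap, eval, mul_comm]

end Eval

section Flag

variable {F V : Type*} [Field F] [AddCommGroup V] [Module F V] [FiniteDimensional F V]
  {W G Fl : ℕ → Submodule F V}

namespace IsCompleteFlag

lemma eq_bot (hW : IsCompleteFlag F W) {j : ℕ} (hj : finrank F V ≤ j) : W j = ⊥ :=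
  finrank_eq_zero.mp (by rw [hW.2.2]; omega)

lemma not_le_succ (hW : IsCompleteFlag F W) {j : ℕ} (hj : j < finrank F V) :
    ¬ W j ≤ W (j + 1) := fun hle => by
  have := finrank_mono hle
  rw [hW.2.2, hW.2.2] at this
  omega

lemma le_sup_span_singleton (hW : IsCompleteFlag F W) {j : ℕ} {x : V} (hx : x ∈ W j)
    (hx' : x ∉ W (j + 1)) : W j ≤ W (j + 1) ⊔ span F {x} := by
  have hle : W (j + 1) ⊔ span F {x} ≤ W j :=
    sup_le (hW.1 j.le_succ) ((span_singleton_le_iff_mem x _).2 hx)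
  have hlt : W (j + 1) < W (j + 1) ⊔ span F {x} := by
    rw [sup_comm]; exact (covBy_span_singleton_sup hx').lt
  replace hlt := finrank_lt_finrank_of_lt hlt
  refine (eq_of_le_of_finrank_le hle ?_).ge
  rw [hW.2.2] at hlt ⊢
  omega

lemma le_span_image_of_mem_of_notMem (hW : IsCompleteFlag F W) {n : ℕ} (hn : finrank F V = n)
    {b : Fin n → V} (hb : ∀ α : Fin n, b α ∈ W α ∧ b α ∉ W (α + 1)) (j : ℕ) :
    W j ≤ span F (b '' {γ | j ≤ (γ : ℕ)}) := by
  induction hd : n - j generalizing j with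
  | zero => rw [hW.eq_bot (by omega)]; exact bot_le
  | succ d ih =>
    have hj : j < n := by omega
    refine (hW.le_sup_span_singleton (hb ⟨j, hj⟩).1 (hb ⟨j, hj⟩).2).trans (sup_le ?_ ?_)
    · refine (ih (j + 1) (by omega)).trans (span_mono (Set.image_mono ?_))
      exact fun γ (hγ : j + 1 ≤ (γ : ℕ)) => show j ≤ (γ : ℕ) by omega
    · exact (span_singleton_le_iff_mem _ _).2
        (subset_span ⟨⟨j, hj⟩, show j ≤ j from le_rfl, rfl⟩)

end IsCompleteFlag

/-- The Bruhat permutation relating two complete flags. -/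
def relPos (G Fl : ℕ → Submodule F V) (α : ℕ) : ℕ :=
  Nat.findGreatest (fun β => ¬ G α ⊓ Fl β ≤ G (α + 1)) (finrank F V)

lemma not_inf_relPos_le (hG : IsCompleteFlag F G) (hFl : IsCompleteFlag F Fl) {α : ℕ}
    (hα : α < finrank F V) :
    ¬ G α ⊓ Fl (relPos G Fl α) ≤ G (α + 1) :=
  Nat.findGreatest_spec (P := fun β => ¬ G α ⊓ Fl β ≤ G (α + 1)) (Nat.zero_le _)
    (by rw [hFl.2.1, inf_top_eq]; exact hG.not_le_succ hα)

lemma relPos_lt (hG : IsCompleteFlag F G) (hFl : IsCompleteFlag F Fl) {α : ℕ}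
    (hα : α < finrank F V) : relPos G Fl α < finrank F V := by
  refine (Nat.findGreatest_le _).lt_of_ne fun h => not_inf_relPos_le hG hFl hα ?_
  rw [show relPos G Fl α = finrank F V from h, hFl.eq_bot le_rfl, inf_bot_eq]
  exact bot_le

lemma inf_relPos_succ_le (hG : IsCompleteFlag F G) (hFl : IsCompleteFlag F Fl) {α : ℕ}
    (hα : α < finrank F V) :
    G α ⊓ Fl (relPos G Fl α + 1) ≤ G (α + 1) :=
  not_not.mp (Nat.findGreatest_is_greatest (Nat.lt_succ_self _) (relPos_lt hG hFl hα))

lemma relPos_ne_of_lt (hG : IsCompleteFlag F G) (hFl : IsCompleteFlag F Fl) {α α' : ℕ}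
    (hαα' : α < α') (hα' : α' < finrank F V) :
    relPos G Fl α ≠ relPos G Fl α' := by
  intro h
  set β := relPos G Fl α
  have hα := hαα'.trans hα'
  obtain ⟨x, ⟨hxG, hxFl⟩, hx⟩ := SetLike.not_le_iff_exists.mp (not_inf_relPos_le hG hFl hα)
  obtain ⟨y, ⟨hyG, hyFl⟩, hy⟩ := SetLike.not_le_iff_exists.mp (not_inf_relPos_le hG hFl hα')
  rw [← h] at hyFl
  have hyFl' : y ∉ Fl (β + 1) :=
    fun hy' => hy (inf_relPos_succ_le hG hFl hα' ⟨hyG, h ▸ hy'⟩)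
  -- `y` spans `Fl β` modulo `Fl (β + 1)`, and `x - c • y ∈ G α ⊓ Fl (β + 1) ≤ G (α + 1)`.
  obtain ⟨z, hz, _, hcy, rfl⟩ := mem_sup.mp (hFl.le_sup_span_singleton hyFl hyFl' hxFl)
  obtain ⟨c, rfl⟩ := mem_span_singleton.mp hcy
  have hcyG : c • y ∈ G (α + 1) := smul_mem _ c (hG.1 hαα' hyG)
  have hzG : z ∈ G α := by simpa using sub_mem hxG (hG.1 α.le_succ hcyG)
  exact hx (add_mem (inf_relPos_succ_le hG hFl hα ⟨hzG, hz⟩) hcyG)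

lemma relPos_injOn (hG : IsCompleteFlag F G) (hFl : IsCompleteFlag F Fl) :
    Set.InjOn (relPos G Fl) (Set.Iio (finrank F V)) := by
  intro α hα α' hα' h
  rcases lt_trichotomy α α' with hlt | heq | hgt
  · exact absurd h (relPos_ne_of_lt hG hFl hlt hα')
  · exact heq
  · exact absurd h.symm (relPos_ne_of_lt hG hFl hgt hα)

theorem exists_adapted_basis (hG : IsCompleteFlag F G) (hFl : IsCompleteFlag F Fl) {n : ℕ}
    (hn : finrank F V = n) :
    ∃ (b : Fin n → V) (w : Equiv.Perm (Fin n)), (∀ α : Fin n, b α ∈ G α ∧ b α ∈ Fl (w α)) ∧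
      ∀ j, G j ≤ span F (b '' {γ | j ≤ (γ : ℕ)}) := by
  subst hn
  let w (α : Fin (finrank F V)) : Fin (finrank F V) := ⟨relPos G Fl α, relPos_lt hG hFl α.2⟩
  have hw : Function.Injective w := fun α α' h =>
    Fin.ext (relPos_injOn hG hFl α.2 α'.2 (congrArg Fin.val h))
  choose b hb hb' using fun α : Fin (finrank F V) =>
    SetLike.not_le_iff_exists.mp (not_inf_relPos_le hG hFl α.2)
  exact ⟨b, Equiv.ofBijective w hw.bijective_of_finite, fun α => hb α,
    hG.le_span_image_of_mem_of_notMem rfl fun α => ⟨(hb α).1, hb' α⟩⟩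

end Flag

section FlagSupport

variable {F : Type*} [Field F] {n : Fin k → ℕ} {f : Tensor F fun i => Fin (n i)}
  {G : ∀ i, ℕ → Submodule F (Fin (n i) → F)} {b : ∀ i, Fin (n i) → Fin (n i) → F}

lemma exists_le_eval_ne_zero (hspan : ∀ i j, G i j ≤ span F (b i '' {γ | j ≤ (γ : ℕ)}))
    {α : ∀ i, Fin (n i)} (hα : α ∈ suppFlag f G) :
    ∃ β, α ≤ β ∧ eval f (fun i => b i (β i)) ≠ 0 := by
  obtain ⟨v, hvG, hv⟩ := hα
  obtain ⟨x, hx, hfx⟩ := (toMultilinearMap f).exists_apply_ne_zero_of_mem_span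
    (fun i => hspan i _ (hvG i)) (by rwa [toMultilinearMap_apply])
  choose β hαβ hβ using fun i => hx i (Set.mem_univ i)
  refine ⟨β, hαβ, ?_⟩
  rwa [toMultilinearMap_apply, ← funext hβ] at hfx

lemma eval_ne_zero_of_mem_maxPoints (hbG : ∀ i (γ : Fin (n i)), b i γ ∈ G i γ)
    (hspan : ∀ i j, G i j ≤ span F (b i '' {γ | j ≤ (γ : ℕ)}))
    {α : ∀ i, Fin (n i)} (hα : α ∈ maxPoints (suppFlag f G)) :
    eval f (fun i => b i (α i)) ≠ 0 := by
  obtain ⟨β, hαβ, hβ⟩ := exists_le_eval_ne_zero hspan hα.1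
  obtain rfl : α = β := hαβ.eq_of_not_lt (hα.2 β ⟨_, fun i => hbG i (β i), hβ⟩)
  exact hβ

end FlagSupport

/-- maximal points of the support w.r.t. one flag tuple inject (by
coordinatewise permutations) into the support w.r.t. any other flag tuple. -/
theorem statement5 {k : ℕ} {F : Type*} [Field F] {n : Fin k → ℕ}
    (f : Tensor F fun i => Fin (n i))
    (Fl G : ∀ i, ℕ → Submodule F (Fin (n i) → F))
    (hFl : ∀ i, IsCompleteFlag F (Fl i)) (hG : ∀ i, IsCompleteFlag F (G i)) :
    ∃ φ : ∀ i, Equiv.Perm (Fin (n i)),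
      (fun α i => φ i (α i)) '' maxPoints (suppFlag f G) ⊆ suppFlag f Fl := by
  choose b w hb hspan using fun i => exists_adapted_basis (hG i) (hFl i) (finrank_fin_fun F)
  refine ⟨w, ?_⟩
  rintro _ ⟨α, hα, rfl⟩
  exact ⟨fun i => b i (α i), fun i => (hb i (α i)).2,
    eval_ne_zero_of_mem_maxPoints (fun i γ => (hb i γ).1) hspan hα⟩

end CVZ

end
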